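/- Let K ⊆ ℝ² be a convex set. The function p ↦ dist(p, Kᶜ) (distance to the complement of K) is concave on K. -/

import Mathlib

/-! Every point of `K` within distance `dist(p, Kᶜ)` of `p` lies in `K`. If `y` is closer than
`D = t·dist(p, Kᶜ) + (1-t)·dist(q, Kᶜ)` to `z = t•p + (1-t)•q`, split the displacement `y - z`
proportionally to the two radii: `y = t•(p + dist(p, Kᶜ)•u) + (1-t)•(q + dist(q, Kᶜ)•u)` with
`u = (y - z)/D` of norm `< 1`, so both points lie in `K` and, by convexity, so does `y`.
Hence the ball of radius `D` about `z` lies in `K`, i.e. `D ≤ dist(z, Kᶜ)`. -/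

open Metric

section

variable {E : Type*} [NormedAddCommGroup E] [NormedSpace ℝ E] {K : Set E} {p q u : E}

theorem add_infDist_compl_smul_mem (hp : p ∈ K) (hu : ‖u‖ < 1) :
    p + infDist p Kᶜ • u ∈ K := by
  by_contra hout
  have hle : infDist p Kᶜ ≤ infDist p Kᶜ * ‖u‖ := by
    simpa [norm_smul, abs_of_nonneg infDist_nonneg] using
      infDist_le_dist_of_mem (x := p) (show p + infDist p Kᶜ • u ∈ Kᶜ from hout)
  have hzero : infDist p Kᶜ = 0 := by
    nlinarith [infDist_nonneg (x := p) (s := Kᶜ), norm_nonneg u]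
  exact hout (by simpa [hzero] using hp)

theorem Convex.ball_combo_infDist_compl_subset (hK : Convex ℝ K) (hp : p ∈ K) (hq : q ∈ K)
    {a b : ℝ} (ha : 0 ≤ a) (hb : 0 ≤ b) (hab : a + b = 1) :
    ball (a • p + b • q) (a * infDist p Kᶜ + b * infDist q Kᶜ) ⊆ K := by
  intro y hy
  set D := a * infDist p Kᶜ + b * infDist q Kᶜ
  have hD : 0 < D := dist_nonneg.trans_lt hy
  set u := D⁻¹ • (y - (a • p + b • q))
  have hu : ‖u‖ < 1 := by
    rw [norm_smul, norm_inv, Real.norm_of_nonneg hD.le, ← dist_eq_norm]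
    exact (inv_mul_lt_one₀ hD).2 hy
  have hDu : D • u = y - (a • p + b • q) := smul_inv_smul₀ hD.ne' _
  clear_value u
  have hsplit : y = a • (p + infDist p Kᶜ • u) + b • (q + infDist q Kᶜ • u) :=
    calc y = a • p + b • q + D • u := by rw [hDu]; abel
      _ = _ := by module
  rw [hsplit]
  exact hK (add_infDist_compl_smul_mem hp hu) (add_infDist_compl_smul_mem hq hu) ha hb hab

theorem Convex.concaveOn_infDist_compl (hK : Convex ℝ K) :
    ConcaveOn ℝ K fun x => infDist x Kᶜ := by
  refine ⟨hK, fun p hp q hq a b ha hb hab => ?_⟩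
  rcases Kᶜ.eq_empty_or_nonempty with hempty | hne
  · simp [hempty]
  rw [smul_eq_mul, smul_eq_mul, le_infDist hne]
  intro y hy
  by_contra hlt
  exact hy (hK.ball_combo_infDist_compl_subset hp hq ha hb hab (mem_ball'.2 (not_le.1 hlt)))

end

theorem stmt_4_general (K : Set (EuclideanSpace ℝ (Fin 2)))
    (hconv : Convex ℝ K) :
    ∀ p ∈ K, ∀ q ∈ K, ∀ t : ℝ, t ∈ Set.Icc (0 : ℝ) 1 →
      t * Metric.infDist p Kᶜ + (1 - t) * Metric.infDist q Kᶜ ≤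
        Metric.infDist (t • p + (1 - t) • q) Kᶜ := by
  intro p hp q hq t ⟨ht0, ht1⟩
  exact hconv.concaveOn_infDist_compl.2 hp hq ht0 (sub_nonneg.2 ht1) (add_sub_cancel t 1)

theorem stmt_4 (K : Set (EuclideanSpace ℝ (Fin 2)))
    (hconv : Convex ℝ K) (hne : Kᶜ.Nonempty) :
    ∀ p ∈ K, ∀ q ∈ K, ∀ t : ℝ, t ∈ Set.Icc (0 : ℝ) 1 →
      t * Metric.infDist p Kᶜ + (1 - t) * Metric.infDist q Kᶜ ≤
        Metric.infDist (t • p + (1 - t) • q) Kᶜ :=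
  stmt_4_general K hconv
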